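/- arXiv:1804.05421 — 3 statements merged into one kernel-verified Lean document; each statement's English description precedes it below -/
import Mathlib

section
/- For any unit quaternion p ∈ S³, the map h ↦ -conj(h p⁻¹) · p is the Euclidean reflection of ℍ ≅ ℝ⁴ about the hyperplane through 0 orthogonal to p; in particular h ↦ -conj(h) is the reflection about the hyperplane E³ of purely imaginary quaternions. -/
/-!
Writing `q = h p⁻¹`, we have `-conj q = q - 2 re q`, so `-conj q · p = h - 2 (re q) p`, and
`re (h p⁻¹) = re (h · conj p) / ‖p‖² = ⟨h, p⟩ / ‖p‖²`. Hence for every nonzero `p` the map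
`h ↦ -conj (h p⁻¹) p` is `h ↦ h - 2 ⟨h, p⟩ / ‖p‖² · p`, the reflection in `p⊥`.
-/

namespace Quaternion

theorem re_mul_inv (h p : ℍ[ℝ]) : (h * p⁻¹).re = inner ℝ h p / ‖p‖ ^ 2 := by
  rw [inv_def, mul_smul_comm, re_smul, inner_def, smul_eq_mul, normSq_eq_norm_mul_self, ← sq,
    inv_mul_eq_div]

theorem neg_star_mul (q p : ℍ[ℝ]) : -star q * p = q * p - (2 * q.re) • p := by
  rw [star_eq_two_re_sub, neg_sub, sub_mul, coe_mul_eq_smul]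

theorem neg_star_mul_inv_mul (h : ℍ[ℝ]) {p : ℍ[ℝ]} (hp : p ≠ 0) :
    -star (h * p⁻¹) * p = h - (2 * inner ℝ h p / ‖p‖ ^ 2) • p := by
  rw [neg_star_mul, inv_mul_cancel_right₀ hp, re_mul_inv, mul_div_assoc]

end Quaternion

/-- For any unit quaternion `p`, the map `h ↦ -conj (h p⁻¹) p` is the Euclidean
reflection of `ℍ ≅ ℝ⁴` about the hyperplane through `0` orthogonal to `p`,
i.e. `x ↦ x - 2⟨x, p⟩ p`; in particular `h ↦ -conj h` is the reflection about
the hyperplane of purely imaginary quaternions (the hyperplane orthogonal to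
`1`). -/
theorem quaternion_reflection (p : Quaternion ℝ) (hp : ‖p‖ = 1) :
    (∀ h : Quaternion ℝ,
      -star (h * p⁻¹) * p = h - (2 * (inner ℝ h p : ℝ)) • p) ∧
    (∀ h : Quaternion ℝ,
      -star h = h - (2 * (inner ℝ h (1 : Quaternion ℝ) : ℝ)) • (1 : Quaternion ℝ)) := by
  have hp0 : p ≠ 0 := norm_ne_zero_iff.mp (by rw [hp]; exact one_ne_zero)
  refine ⟨fun h => ?_, fun h => ?_⟩
  · simpa [hp] using Quaternion.neg_star_mul_inv_mul h hp0
  · simpa using Quaternion.neg_star_mul_inv_mul h one_ne_zero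
end

section
/- For any unit quaternion of the form z₁ + z₂ j ∈ S³ (z₁, z₂ ∈ ℂ ⊂ ℍ), one has (z₁+z₂j)⁻¹ · i · (z₁+z₂j) ∈ S², and the fiber of the map 𝒫: S³ → S², r ↦ r⁻¹ i r, through a point r equals {e^{iθ} r : θ ∈ ℝ}. -/
/-- The imaginary unit `i` of the quaternions. -/
def qI : Quaternion ℝ := ⟨0, 1, 0, 0⟩

/-- `e^{iθ} = cos θ + i sin θ` viewed as a unit quaternion. -/
noncomputable def expI (θ : ℝ) : Quaternion ℝ := ⟨Real.cos θ, Real.sin θ, 0, 0⟩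

/-!
Conjugation `q ↦ r⁻¹ q r` by a unit quaternion preserves the real part (since `re (a b) = re (b a)`)
and the norm, so it sends `i` into the unit sphere of pure quaternions. Two unit quaternions `r, r'`
have the same image iff `r' r⁻¹` commutes with `i`, i.e. iff `r' r⁻¹` lies in `ℂ ⊂ ℍ`; being of
norm one, it is then `e^{iθ}` for `θ = arg (r' r⁻¹)`.
-/

open Quaternion

theorem inv_mul_mul_eq_inv_mul_mul_iff {G₀ : Type*} [GroupWithZero G₀] {a b : G₀} (x : G₀)
    (ha : a ≠ 0) (hb : b ≠ 0) : b⁻¹ * x * b = a⁻¹ * x * a ↔ Commute x (b * a⁻¹) := by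
  constructor
  · intro h
    calc x * (b * a⁻¹) = b * (b⁻¹ * x * b) * a⁻¹ := by simp [mul_assoc, mul_inv_cancel_left₀ hb]
      _ = b * a⁻¹ * x := by rw [h]; simp [mul_assoc, mul_inv_cancel₀ ha]
  · intro h
    calc b⁻¹ * x * b = b⁻¹ * (x * (b * a⁻¹)) * a := by simp [mul_assoc, inv_mul_cancel₀ ha]
      _ = a⁻¹ * x * a := by rw [h.eq]; simp [mul_assoc, inv_mul_cancel_left₀ hb]

namespace Quaternion

theorem re_mul_comm (a b : ℍ) : (a * b).re = (b * a).re := by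
  simp only [re_mul]; ring

theorem re_inv_mul_mul (q : ℍ) {r : ℍ} (hr : r ≠ 0) : (r⁻¹ * q * r).re = q.re := by
  rw [re_mul_comm, mul_inv_cancel_left₀ hr]

theorem norm_inv_mul_mul (q : ℍ) {r : ℍ} (hr : r ≠ 0) : ‖r⁻¹ * q * r‖ = ‖q‖ := by
  rw [norm_mul, norm_mul, norm_inv]
  field_simp [norm_ne_zero_iff.mpr hr]

theorem norm_coeComplex (z : ℂ) : ‖(z : ℍ)‖ = ‖z‖ := by
  rw [← sq_eq_sq₀ (norm_nonneg _) (norm_nonneg _), sq, ← normSq_eq_norm_mul_self, normSq_def',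
    Complex.sq_norm, Complex.normSq_apply]
  simp only [re_coeComplex, imI_coeComplex, imJ_coeComplex, imK_coeComplex]
  ring

end Quaternion

theorem qI_eq_coeComplex : qI = ((Complex.I : ℂ) : ℍ) := by
  ext <;> simp [qI]

theorem expI_eq_coeComplex (θ : ℝ) : expI θ = ((Complex.exp (θ * Complex.I) : ℂ) : ℍ) := by
  ext <;> simp [expI, Complex.exp_ofReal_mul_I_re, Complex.exp_ofReal_mul_I_im]

theorem commute_qI_iff_exists_coeComplex {q : ℍ} : Commute qI q ↔ ∃ z : ℂ, (z : ℍ) = q := by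
  constructor
  · intro h
    have hJ := congrArg QuaternionAlgebra.imJ h.eq
    have hK := congrArg QuaternionAlgebra.imK h.eq
    simp only [qI_eq_coeComplex, imJ_mul, imK_mul, re_coeComplex, imI_coeComplex, imJ_coeComplex,
      imK_coeComplex, Complex.I_re, Complex.I_im] at hJ hK
    refine ⟨⟨q.re, q.imI⟩, ?_⟩
    ext <;> simp <;> linarith
  · rintro ⟨z, rfl⟩
    rw [qI_eq_coeComplex]
    exact (Commute.all _ z).map ofComplex

theorem commute_qI_iff_exists_expI {q : ℍ} (hq : ‖q‖ = 1) :
    Commute qI q ↔ ∃ θ : ℝ, q = expI θ := by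
  rw [commute_qI_iff_exists_coeComplex]
  constructor
  · rintro ⟨z, rfl⟩
    rw [norm_coeComplex] at hq
    refine ⟨z.arg, ?_⟩
    rw [expI_eq_coeComplex, ← one_mul (Complex.exp _), ← Complex.ofReal_one, ← hq,
      Complex.norm_mul_exp_arg_mul_I]
  · rintro ⟨θ, rfl⟩
    exact ⟨_, (expI_eq_coeComplex θ).symm⟩

/-- For any unit quaternion `r ∈ S³`, the Hopf image `𝒫(r) = r⁻¹ i r` lies in
`S²` (it is a purely imaginary unit quaternion), and the fiber of
`𝒫 : S³ → S²`, `r ↦ r⁻¹ i r`, through `r` is exactly `{e^{iθ} r : θ ∈ ℝ}`. -/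
theorem hopf_image_and_fiber (r : Quaternion ℝ) (hr : ‖r‖ = 1) :
    ((r⁻¹ * qI * r).re = 0 ∧ ‖r⁻¹ * qI * r‖ = 1) ∧
    ∀ r' : Quaternion ℝ, ‖r'‖ = 1 →
      (r'⁻¹ * qI * r' = r⁻¹ * qI * r ↔ ∃ θ : ℝ, r' = expI θ * r) := by
  have hr₀ : r ≠ 0 := norm_ne_zero_iff.mp (by simp [hr])
  refine ⟨⟨?_, ?_⟩, fun r' hr' => ?_⟩
  · rw [re_inv_mul_mul _ hr₀, qI_eq_coeComplex, re_coeComplex, Complex.I_re]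
  · rw [norm_inv_mul_mul _ hr₀, qI_eq_coeComplex, norm_coeComplex, Complex.norm_I]
  have hr'₀ : r' ≠ 0 := norm_ne_zero_iff.mp (by simp [hr'])
  have hquot : ‖r' * r⁻¹‖ = 1 := by rw [norm_mul, norm_inv, hr, hr', inv_one, one_mul]
  simp only [inv_mul_mul_eq_inv_mul_mul_iff _ hr₀ hr'₀, commute_qI_iff_exists_expI hquot,
    mul_inv_eq_iff_eq_mul₀ hr₀]
end

section
/- If the isometry h ↦ p⁻¹ h q of S³ (p, q unit quaternions) maps every Hopf fiber {e^{iθ} r : θ ∈ ℝ} onto a Hopf fiber, then p = e^{iτ} or p = e^{iτ} j for some τ ∈ ℝ. -/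
/-- The imaginary unit `j` of the quaternions. -/
def qJ : Quaternion ℝ := ⟨0, 0, 1, 0⟩

/-!
Both `1` and `i` lie on the Hopf fiber through `1`, so `p⁻¹ q` and `p⁻¹ i q` lie on a common
fiber, which forces `i p = p e^{iα}` for some `α`. Conjugation preserves real parts, so
`cos α = re i = 0` and `e^{iα} = ±i`: either `p` commutes with `i`, i.e. `p ∈ ℂ`, or `p`
anticommutes with `i`, i.e. `p ∈ ℂ j`.
-/

open Quaternion Real

theorem Quaternion.re_mul_comm_s12 {R : Type*} [CommRing R] (a b : ℍ[R]) :
    (a * b).re = (b * a).re := by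
  simp only [re_mul]; ring

theorem Quaternion.re_eq_of_mul_eq_mul {R : Type*} [Field R] [LinearOrder R]
    [IsStrictOrderedRing R] {p x w : ℍ[R]} (hp : p ≠ 0) (h : x * p = p * w) :
    x.re = w.re := by
  rw [← inv_mul_cancel_left₀ hp w, ← h, re_mul_comm_s12, mul_inv_cancel_right₀ hp]

theorem Quaternion.sum_sq_eq_one_of_norm_eq_one {p : ℍ} (hp : ‖p‖ = 1) :
    p.re ^ 2 + p.imI ^ 2 + p.imJ ^ 2 + p.imK ^ 2 = 1 := by
  rw [← normSq_def', normSq_eq_norm_mul_self, hp, one_mul]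

theorem expI_zero : expI 0 = 1 := by
  ext <;> simp [expI]

theorem expI_mul (a b : ℝ) : expI a * expI b = expI (a + b) := by
  ext <;> simp only [re_mul, imI_mul, imJ_mul, imK_mul] <;>
    simp [expI, cos_add, sin_add, add_comm]

theorem exists_cos_eq_and_sin_eq {a b : ℝ} (h : a ^ 2 + b ^ 2 = 1) :
    ∃ τ : ℝ, cos τ = a ∧ sin τ = b := by
  set z : ℂ := ⟨a, b⟩
  have hz : ‖z‖ = 1 := by
    rw [Complex.norm_def, Complex.normSq_mk, ← sq, ← sq, h, sqrt_one]
  have hz0 : z ≠ 0 := norm_pos_iff.mp (hz ▸ one_pos)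
  exact ⟨Complex.arg z, by rw [Complex.cos_arg hz0, hz, div_one],
    by rw [Complex.sin_arg, hz, div_one]⟩

theorem exists_eq_expI {p : ℍ} (hp : ‖p‖ = 1) (hJ : p.imJ = 0) (hK : p.imK = 0) :
    ∃ τ : ℝ, p = expI τ := by
  have h := sum_sq_eq_one_of_norm_eq_one hp
  rw [hJ, hK] at h
  obtain ⟨τ, hcos, hsin⟩ := exists_cos_eq_and_sin_eq (a := p.re) (b := p.imI) (by linarith)
  exact ⟨τ, by ext <;> simp [expI, hcos, hsin, hJ, hK]⟩

theorem exists_eq_expI_mul_qJ {p : ℍ} (hp : ‖p‖ = 1) (hre : p.re = 0) (hI : p.imI = 0) :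
    ∃ τ : ℝ, p = expI τ * qJ := by
  have h := sum_sq_eq_one_of_norm_eq_one hp
  rw [hre, hI] at h
  obtain ⟨τ, hcos, hsin⟩ := exists_cos_eq_and_sin_eq (a := p.imJ) (b := p.imK) (by linarith)
  refine ⟨τ, ?_⟩
  ext <;> simp only [re_mul, imI_mul, imJ_mul, imK_mul] <;> simp [expI, qJ, hcos, hsin, hre, hI]

theorem exists_expI_mul_eq_mul_expI {p q r : ℍ} (hp : p ≠ 0) (hr : r ≠ 0)
    (h : ∀ θ : ℝ, ∃ φ : ℝ, p⁻¹ * expI θ * q = expI φ * r) (θ : ℝ) :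
    ∃ α : ℝ, expI θ * p = p * expI α := by
  obtain ⟨φ₀, h₀⟩ := h 0
  obtain ⟨φ, hφ⟩ := h θ
  rw [expI_zero, mul_one] at h₀
  have hcancel : expI θ * p * expI φ₀ = p * expI φ := by
    apply mul_right_cancel₀ hr
    calc expI θ * p * expI φ₀ * r = expI θ * p * (p⁻¹ * q) := by rw [h₀, mul_assoc]
      _ = p * (p⁻¹ * expI θ * q) := by simp only [mul_assoc, mul_inv_cancel_left₀ hp]
      _ = p * expI φ * r := by rw [hφ, mul_assoc]
  refine ⟨φ + -φ₀, ?_⟩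
  rw [← expI_mul, ← mul_assoc, ← hcancel, mul_assoc, expI_mul, add_neg_cancel, expI_zero,
    mul_one]

theorem exists_eq_expI_or_eq_expI_mul_qJ {p : ℍ} (hp : ‖p‖ = 1) {α : ℝ}
    (h : expI (π / 2) * p = p * expI α) : ∃ τ : ℝ, p = expI τ ∨ p = expI τ * qJ := by
  have hp0 : p ≠ 0 := norm_pos_iff.mp (hp ▸ one_pos)
  have hcos : cos α = 0 := by
    simpa [expI] using (re_eq_of_mul_eq_mul hp0 h).symm
  have hsin : sin α ^ 2 = 1 := by nlinarith [sin_sq_add_cos_sq α]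
  obtain ⟨hre, hI, hJ, hK⟩ := Quaternion.ext_iff.mp h
  simp only [re_mul, imI_mul, imJ_mul, imK_mul] at hre hI hJ hK
  simp only [expI, cos_pi_div_two, sin_pi_div_two, hcos] at hre hI hJ hK
  rcases sq_eq_one_iff.mp hsin with hs | hs <;> rw [hs] at hre hI hJ hK
  · obtain ⟨τ, hτ⟩ := exists_eq_expI hp (by linarith) (by linarith)
    exact ⟨τ, .inl hτ⟩
  · obtain ⟨τ, hτ⟩ := exists_eq_expI_mul_qJ hp (by linarith) (by linarith)
    exact ⟨τ, .inr hτ⟩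

theorem hopf_fibration_preserving_general (p q : Quaternion ℝ)
    (hp : ‖p‖ = 1)
    (hfib : ∀ r : Quaternion ℝ, ‖r‖ = 1 → ∃ r' : Quaternion ℝ, ‖r'‖ = 1 ∧
      {h : Quaternion ℝ | ∃ θ : ℝ, h = p⁻¹ * (expI θ * r) * q} =
        {h : Quaternion ℝ | ∃ θ : ℝ, h = expI θ * r'}) :
    ∃ τ : ℝ, p = expI τ ∨ p = expI τ * qJ := by
  obtain ⟨r', hr', hfiber⟩ := hfib 1 norm_one
  have hfiber_one : ∀ θ : ℝ, ∃ φ : ℝ, p⁻¹ * expI θ * q = expI φ * r' := fun θ => by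
    have hmem : p⁻¹ * (expI θ * 1) * q ∈ {h | ∃ θ : ℝ, h = expI θ * r'} :=
      hfiber ▸ ⟨θ, rfl⟩
    obtain ⟨φ, hφ⟩ := hmem
    exact ⟨φ, by rwa [mul_one] at hφ⟩
  obtain ⟨α, hα⟩ := exists_expI_mul_eq_mul_expI (norm_pos_iff.mp (hp ▸ one_pos))
    (norm_pos_iff.mp (hr' ▸ one_pos)) hfiber_one (π / 2)
  exact exists_eq_expI_or_eq_expI_mul_qJ hp hα

/-- If the isometry `h ↦ p⁻¹ h q` of `S³` (`p, q` unit quaternions) maps every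
Hopf fiber `{e^{iθ} r : θ ∈ ℝ}` onto a Hopf fiber, then `p = e^{iτ}` or
`p = e^{iτ} j` for some `τ ∈ ℝ`. -/
theorem hopf_fibration_preserving (p q : Quaternion ℝ)
    (hp : ‖p‖ = 1) (hq : ‖q‖ = 1)
    (hfib : ∀ r : Quaternion ℝ, ‖r‖ = 1 → ∃ r' : Quaternion ℝ, ‖r'‖ = 1 ∧
      {h : Quaternion ℝ | ∃ θ : ℝ, h = p⁻¹ * (expI θ * r) * q} =
        {h : Quaternion ℝ | ∃ θ : ℝ, h = expI θ * r'}) :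
    ∃ τ : ℝ, p = expI τ ∨ p = expI τ * qJ :=
  hopf_fibration_preserving_general p q hp hfib
end
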